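/- Let V = ℝ^{2s} (s ≥ 2) with the curvature tensor B whose nonzero components are B(U_i,U_j,U_k,T_l) = δ_{il}δ_{jk} - δ_{ik}δ_{jl}. Then (V,B) is irreducible: there is no decomposition V = W₁ ⊕ W₂ with both W₁,W₂ nonzero such that B vanishes whenever one argument is in W₁ and another is in W₂. -/

import Mathlib

/-- `ℝ^{2s}` with coordinates `(u, t)`: `x.1` are the `U`-coordinates, `x.2` the `T`-coordinates. -/
abbrev VUT (s : ℕ) := (Fin s → ℝ) × (Fin s → ℝ)

/-- The Euclidean dot product on `Fin s → ℝ`. -/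
def dotp {s : ℕ} (x y : Fin s → ℝ) : ℝ := ∑ i, x i * y i

/-- The multilinear extension (respecting the curvature symmetries) of the algebraic
curvature tensor whose only nonzero components up to the `ℤ₂` symmetries are
`B(U_i,U_j,U_k,T_l) = δ_{il}δ_{jk} - δ_{ik}δ_{jl}`. -/
def B2 {s : ℕ} (a b c d : VUT s) : ℝ :=
    (dotp a.1 d.2 * dotp b.1 c.1 - dotp a.1 c.1 * dotp b.1 d.2)
  - (dotp a.1 c.2 * dotp b.1 d.1 - dotp a.1 d.1 * dotp b.1 c.2)
  + (dotp c.1 b.2 * dotp d.1 a.1 - dotp c.1 a.1 * dotp d.1 b.2)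
  - (dotp c.1 a.2 * dotp d.1 b.1 - dotp c.1 b.1 * dotp d.1 a.2)

/-!
Suppose `B` splits along `V = W₁ ⊕ W₂`, and take `x ∈ W₁`, `y ∈ W₂`. Evaluating
`B(x, U_j, y, T_i) = 0` says that the rank-one matrix `x_U ⊗ y_U` is a multiple of the
identity; as `s ≥ 2` this forces `x_U = 0` or `y_U = 0`. So, up to swapping the summands
(pair symmetry of `B`), the `U`-part vanishes on all of `W₁`. Then a nonzero `x ∈ W₁` has
`x_T ≠ 0`, and `B(x, U_i, y, U_j) = 0` makes `x_T ⊗ y_U` a multiple of the identity, so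
`y_U = 0` on `W₂` as well. Hence the `U`-part vanishes on `W₁ ⊕ W₂ = V`, which is absurd.
-/

lemma dotp_comm {s : ℕ} (x y : Fin s → ℝ) : dotp x y = dotp y x := by
  simp only [dotp, mul_comm]

lemma B2_pair_comm {s : ℕ} (a b c d : VUT s) : B2 a b c d = B2 c d a b := by
  simp only [B2, dotp_comm c.1 a.1, dotp_comm d.1 b.1, dotp_comm d.1 a.1, dotp_comm c.1 b.1]
  ring

/-- For `i ≠ j`, `c² = (f i g i)(f j g j) = (f i g j)(f j g i) = 0`. -/
lemma eq_zero_or_eq_zero_of_mul_eq_ite {ι R : Type*} [DecidableEq ι] [Nontrivial ι]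
    [CommRing R] [NoZeroDivisors R] {f g : ι → R} {c : R}
    (h : ∀ i j, f i * g j = if i = j then c else 0) : f = 0 ∨ g = 0 := by
  obtain ⟨i, j, hij⟩ := exists_pair_ne ι
  have hc : c = 0 := by
    refine mul_self_eq_zero.mp ?_
    calc c * c = (f i * g i) * (f j * g j) := by rw [h i i, h j j, if_pos rfl, if_pos rfl]
      _ = (f i * g j) * (f j * g i) := by ring
      _ = 0 := by rw [h i j, if_neg hij, zero_mul]
  by_contra! hfg
  obtain ⟨k, hk⟩ := Function.ne_iff.mp hfg.1
  obtain ⟨l, hl⟩ := Function.ne_iff.mp hfg.2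
  have hkl := h k l
  rw [hc, ite_self] at hkl
  exact mul_ne_zero hk hl hkl

section Evaluation

variable {s : ℕ}

def basisU (i : Fin s) : VUT s := (Pi.single i 1, 0)

def basisT (i : Fin s) : VUT s := (0, Pi.single i 1)

lemma dotp_single_left (i : Fin s) (x : Fin s → ℝ) : dotp (Pi.single i 1) x = x i :=
  (single_dotProduct (v := x) 1 i).trans (one_mul _)

lemma dotp_single_right (i : Fin s) (x : Fin s → ℝ) : dotp x (Pi.single i 1) = x i :=
  (dotProduct_single (v := x) 1 i).trans (mul_one _)

lemma dotp_zero_left (x : Fin s → ℝ) : dotp 0 x = 0 := zero_dotProduct x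

lemma dotp_zero_right (x : Fin s → ℝ) : dotp x 0 = 0 := dotProduct_zero x

lemma B2_basisU_basisT (x y : VUT s) (i j : Fin s) :
    B2 x (basisU j) y (basisT i) = x.1 i * y.1 j - if i = j then dotp x.1 y.1 else 0 := by
  simp only [B2, basisU, basisT, dotp_single_left, dotp_single_right, dotp_zero_left,
    dotp_zero_right, dotp_comm y.1 x.1, Pi.single_apply, Pi.zero_apply]
  split_ifs <;> ring

lemma B2_basisU_basisU (x y : VUT s) (i j : Fin s) :
    B2 x (basisU i) y (basisU j) =
      x.1 j * y.2 i + x.2 j * y.1 i - if i = j then dotp x.1 y.2 + dotp y.1 x.2 else 0 := by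
  simp only [B2, basisU, dotp_single_left, dotp_single_right, dotp_zero_right,
    Pi.single_apply, eq_comm (a := j)]
  split_ifs <;> ring

variable [Nontrivial (Fin s)] {x y : VUT s}

lemma fst_eq_zero_or_fst_eq_zero_of_B2 (h : ∀ η ζ, B2 x η y ζ = 0) : x.1 = 0 ∨ y.1 = 0 :=
  eq_zero_or_eq_zero_of_mul_eq_ite fun i j => by
    linarith [B2_basisU_basisT x y i j ▸ h (basisU j) (basisT i)]

lemma snd_eq_zero_or_fst_eq_zero_of_B2 (h : ∀ η ζ, B2 x η y ζ = 0) (hx : x.1 = 0) :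
    x.2 = 0 ∨ y.1 = 0 :=
  eq_zero_or_eq_zero_of_mul_eq_ite (c := dotp y.1 x.2) fun j i => by
    have hji := B2_basisU_basisU x y i j ▸ h (basisU i) (basisU j)
    simp only [hx, Pi.zero_apply, zero_mul, zero_add, dotp_zero_left, eq_comm (a := i)] at hji
    split_ifs at hji ⊢ <;> linarith

end Evaluation

section Splitting

variable {s : ℕ} [Nontrivial (Fin s)] {W₁ W₂ : Submodule ℝ (VUT s)}

lemma fst_vanishes_of_B2 (h : ∀ x ∈ W₁, ∀ y ∈ W₂, ∀ η ζ, B2 x η y ζ = 0) :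
    (∀ x ∈ W₁, x.1 = 0) ∨ ∀ y ∈ W₂, y.1 = 0 := by
  by_contra! hW
  obtain ⟨⟨x, hx, hx₁⟩, ⟨y, hy, hy₁⟩⟩ := hW
  exact (fst_eq_zero_or_fst_eq_zero_of_B2 (h x hx y hy)).elim hx₁ hy₁

lemma fst_vanishes_right_of_B2 (h : ∀ x ∈ W₁, ∀ y ∈ W₂, ∀ η ζ, B2 x η y ζ = 0)
    (hW₁ : W₁ ≠ ⊥) (h₁ : ∀ x ∈ W₁, x.1 = 0) : ∀ y ∈ W₂, y.1 = 0 := by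
  obtain ⟨x, hx, hx0⟩ := Submodule.exists_mem_ne_zero_of_ne_bot hW₁
  have hx₂ : x.2 ≠ 0 := fun hx₂ => hx0 (Prod.ext (h₁ x hx) hx₂)
  exact fun y hy => (snd_eq_zero_or_fst_eq_zero_of_B2 (h x hx y hy) (h₁ x hx)).resolve_left hx₂

end Splitting

/-- Lemma 4.2 (2): `(ℝ^{2s}, B)` is irreducible: there is no direct sum decomposition with
both summands nonzero and `B` vanishing whenever one argument lies in `W₁` and another in `W₂`
(the remaining arguments being arbitrary, in any positions). -/
theorem stmt3 (s : ℕ) (hs : 2 ≤ s) :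
    ¬ ∃ W₁ W₂ : Submodule ℝ (VUT s), W₁ ≠ ⊥ ∧ W₂ ≠ ⊥ ∧ IsCompl W₁ W₂ ∧
      (∀ ξ₁ ∈ W₁, ∀ ξ₂ ∈ W₂, ∀ η ζ : VUT s,
        B2 ξ₁ ξ₂ η ζ = 0 ∧ B2 ξ₁ η ξ₂ ζ = 0 ∧ B2 ξ₁ η ζ ξ₂ = 0) := by
  rintro ⟨W₁, W₂, hW₁, hW₂, hcompl, hvan⟩
  have : Nontrivial (Fin s) := Fin.nontrivial_iff_two_le.mpr hs
  have h₁₂ : ∀ x ∈ W₁, ∀ y ∈ W₂, ∀ η ζ, B2 x η y ζ = 0 :=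
    fun x hx y hy η ζ => (hvan x hx y hy η ζ).2.1
  have h₂₁ : ∀ y ∈ W₂, ∀ x ∈ W₁, ∀ η ζ, B2 y η x ζ = 0 :=
    fun y hy x hx η ζ => B2_pair_comm y η x ζ ▸ h₁₂ x hx y hy ζ η
  have hfst : (∀ x ∈ W₁, x.1 = 0) ∧ ∀ y ∈ W₂, y.1 = 0 := by
    rcases fst_vanishes_of_B2 h₁₂ with h₁ | h₂
    · exact ⟨h₁, fst_vanishes_right_of_B2 h₁₂ hW₁ h₁⟩
    · exact ⟨fst_vanishes_right_of_B2 h₂₁ hW₂ h₂, h₂⟩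
  have hU : basisU (⟨0, by omega⟩ : Fin s) ∈ W₁ ⊔ W₂ := hcompl.sup_eq_top ▸ Submodule.mem_top
  obtain ⟨x, hx, y, hy, hxy⟩ := Submodule.mem_sup.mp hU
  have := congr_arg (fun v : VUT s => v.1 ⟨0, by omega⟩) hxy
  simp [basisU, hfst.1 x hx, hfst.2 y hy] at this
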